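/- (Optimal policy of discrete-time exploratory MV) In the backward recursion of the exploratory mean-variance problem, the minimizing density at time t and state x is the Gaussian with mean -a r_f (x - r_f^{-(T-t)} w)/(a²+σ²) and variance (λ/(2(a²+σ²))) · ((a²+σ²)/(σ²r_f²))^{T-t-1}. -/

import Mathlib

open MeasureTheory Real

/-- Gaussian density with mean `m` and variance `s2`. -/
noncomputable def gaussPdf (m s2 u : ℝ) : ℝ :=
  (Real.sqrt (2 * Real.pi * s2))⁻¹ * Real.exp (-(u - m) ^ 2 / (2 * s2))

/-- A probability density on ℝ. -/
def IsDensity (p : ℝ → ℝ) : Prop := (∀ u, 0 ≤ p u) ∧ (∫ u, p u) = 1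

/-- One step of the exploratory MV Bellman operator. -/
noncomputable def stepVal {Ω : Type*} [MeasurableSpace Ω] (μ : Measure Ω)
    (r : Ω → ℝ) (rf lam : ℝ) (Vnext : ℝ → ℝ) (x : ℝ) (p : ℝ → ℝ) : ℝ :=
  (∫ ω, ∫ u, Vnext (rf * x + r ω * u) * p u ∂volume ∂μ) +
    lam * ∫ u, p u * Real.log (p u)

/-!
If `V_{t+1}(y) = C (y - m)² + D` with `C > 0`, averaging over the return `r` turns the Bellman
objective into `C (a² + σ²) ∫ (u - m₀)² p + λ ∫ p log p + const` with
`m₀ = -a (r_f x - m) / (a² + σ²)`. The Gaussian `q` with mean `m₀` and variance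
`λ / (2 C (a² + σ²))` has `λ log q` equal to `-C (a² + σ²) (u - m₀)²` up to a constant, so Gibbs'
inequality `∫ p log q ≤ ∫ p log p` shows that `q` is the minimiser. The minimum is again quadratic
in `x`, with `C` multiplied by `σ² r_f² / (a² + σ²)` and `m` divided by `r_f`; backward induction
from `V_T` gives the stated mean and variance.
-/

open ProbabilityTheory

lemma integral_linear_combination₃ {α : Type*} [MeasurableSpace α] {ν : Measure α}
    {f g h : α → ℝ} (hf : Integrable f ν) (hg : Integrable g ν) (hh : Integrable h ν)
    (c₀ c₁ c₂ : ℝ) :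
    ∫ x, (c₀ * f x + c₁ * g x + c₂ * h x) ∂ν =
      c₀ * (∫ x, f x ∂ν) + c₁ * (∫ x, g x ∂ν) + c₂ * ∫ x, h x ∂ν := by
  have hfg : Integrable (fun x => c₀ * f x + c₁ * g x) ν :=
    (hf.const_mul _).add (hg.const_mul _)
  rw [integral_add hfg (hh.const_mul _), integral_add (hf.const_mul _) (hg.const_mul _),
    integral_const_mul, integral_const_mul, integral_const_mul]

namespace IsDensity

variable {p : ℝ → ℝ}

lemma integrable (hp : IsDensity p) : Integrable p := by
  by_contra h
  simpa [integral_undef h] using hp.2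

lemma integrable_id_mul (hp : IsDensity p) (hp2 : Integrable fun u => u ^ 2 * p u) :
    Integrable fun u => u * p u := by
  refine (hp.integrable.add hp2).mono' (aestronglyMeasurable_id.mul hp.integrable.1) ?_
  filter_upwards with u
  have hu : |u| ≤ 1 + u ^ 2 := by nlinarith [abs_nonneg u, sq_abs u]
  rw [Pi.add_apply, norm_mul, Real.norm_eq_abs, Real.norm_of_nonneg (hp.1 u)]
  nlinarith [mul_le_mul_of_nonneg_right hu (hp.1 u)]

lemma integrable_sub_sq (hp : IsDensity p) (hp2 : Integrable fun u => u ^ 2 * p u) (c : ℝ) :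
    Integrable fun u => (u - c) ^ 2 * p u := by
  refine (((hp.integrable.const_mul (c ^ 2)).add
    ((hp.integrable_id_mul hp2).const_mul (-2 * c))).add (hp2.const_mul 1)).congr ?_
  filter_upwards with u
  simp only [Pi.add_apply]
  ring

lemma integral_sub_sq (hp : IsDensity p) (hp2 : Integrable fun u => u ^ 2 * p u) (c : ℝ) :
    ∫ u, (u - c) ^ 2 * p u = (∫ u, u ^ 2 * p u) - 2 * c * (∫ u, u * p u) + c ^ 2 := by
  calc ∫ u, (u - c) ^ 2 * p u
      = ∫ u, (c ^ 2 * p u + -2 * c * (u * p u) + 1 * (u ^ 2 * p u)) := by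
        congr 1; ext u; ring
    _ = _ := by
        rw [integral_linear_combination₃ hp.integrable (hp.integrable_id_mul hp2) hp2, hp.2]
        ring

lemma integral_mul_log_le {q : ℝ → ℝ} (hp : IsDensity p) (hq : IsDensity q)
    (hq_pos : ∀ u, 0 < q u) (hpp : Integrable fun u => p u * log (p u))
    (hpq : Integrable fun u => p u * log (q u)) :
    ∫ u, p u * log (q u) ≤ ∫ u, p u * log (p u) := by
  have hpointwise : ∀ u, p u * log (q u) - p u * log (p u) ≤ q u - p u := by
    intro u
    rcases (hp.1 u).eq_or_lt with h0 | h0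
    · simp [← h0, (hq_pos u).le]
    · have hlog := Real.log_le_sub_one_of_pos (div_pos (hq_pos u) h0)
      rw [Real.log_div (hq_pos u).ne' h0.ne'] at hlog
      calc p u * log (q u) - p u * log (p u) = p u * (log (q u) - log (p u)) := by ring
        _ ≤ p u * (q u / p u - 1) := mul_le_mul_of_nonneg_left hlog h0.le
        _ = q u - p u := by field_simp
  have := integral_mono (f := fun u => p u * log (q u) - p u * log (p u))
    (g := fun u => q u - p u) (hpq.sub hpp) (hq.integrable.sub hp.integrable) hpointwise
  rw [integral_sub hpq hpp, integral_sub hq.integrable hp.integrable, hq.2, hp.2] at this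
  linarith

end IsDensity

section Gaussian

variable {m s2 : ℝ}

lemma gaussPdf_eq_gaussianPDFReal (hs2 : 0 ≤ s2) :
    gaussPdf m s2 = gaussianPDFReal m s2.toNNReal := by
  ext u
  rw [gaussPdf, gaussianPDFReal, Real.coe_toNNReal _ hs2]

lemma gaussPdf_pos (hs2 : 0 < s2) (u : ℝ) : 0 < gaussPdf m s2 u := by
  rw [gaussPdf_eq_gaussianPDFReal hs2.le]
  exact gaussianPDFReal_pos _ _ _ (by simpa using hs2)

lemma isDensity_gaussPdf (hs2 : 0 < s2) : IsDensity (gaussPdf m s2) := by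
  rw [gaussPdf_eq_gaussianPDFReal hs2.le]
  exact ⟨gaussianPDFReal_nonneg _ _, integral_gaussianPDFReal_eq_one _ (by simpa using hs2)⟩

lemma integrable_mul_gaussPdf_iff (hs2 : 0 < s2) {f : ℝ → ℝ} :
    Integrable (fun u => f u * gaussPdf m s2 u) ↔ Integrable f (gaussianReal m s2.toNNReal) := by
  rw [gaussianReal_of_var_ne_zero _ (by simpa using hs2),
    integrable_withDensity_iff_integrable_smul' (measurable_gaussianPDF _ _)
      (ae_of_all _ fun _ => gaussianPDF_lt_top), gaussPdf_eq_gaussianPDFReal hs2.le]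
  simp only [toReal_gaussianPDF, smul_eq_mul, mul_comm]

lemma integral_mul_gaussPdf (hs2 : 0 < s2) (f : ℝ → ℝ) :
    ∫ u, f u * gaussPdf m s2 u = ∫ u, f u ∂gaussianReal m s2.toNNReal := by
  rw [integral_gaussianReal_eq_integral_smul (by simpa using hs2),
    gaussPdf_eq_gaussianPDFReal hs2.le]
  simp only [smul_eq_mul, mul_comm]

lemma integrable_sub_sq_mul_gaussPdf (hs2 : 0 < s2) (c : ℝ) :
    Integrable fun u => (u - c) ^ 2 * gaussPdf m s2 u :=
  (integrable_mul_gaussPdf_iff hs2).2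
    ((memLp_id_gaussianReal 2).sub (memLp_const c)).integrable_sq

lemma integral_sub_sq_mul_gaussPdf (hs2 : 0 < s2) :
    ∫ u, (u - m) ^ 2 * gaussPdf m s2 u = s2 := by
  have h := variance_fun_id_gaussianReal (μ := m) (v := s2.toNNReal)
  rw [variance_eq_integral measurable_id'.aemeasurable, integral_id_gaussianReal,
    Real.coe_toNNReal _ hs2.le] at h
  rw [integral_mul_gaussPdf hs2, h]

lemma log_gaussPdf (hs2 : 0 < s2) (u : ℝ) :
    log (gaussPdf m s2 u) = -(1 / 2) * log (2 * π * s2) - (u - m) ^ 2 / (2 * s2) := by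
  rw [gaussPdf, Real.log_mul (by positivity) (Real.exp_pos _).ne', Real.log_exp,
    Real.log_inv, Real.log_sqrt (by positivity)]
  ring

lemma mul_log_gaussPdf (hs2 : 0 < s2) (c u : ℝ) :
    c * log (gaussPdf m s2 u) =
      -(1 / 2) * log (2 * π * s2) * c - (u - m) ^ 2 * c / (2 * s2) := by
  rw [log_gaussPdf hs2]
  ring

lemma integrable_mul_log_gaussPdf (hs2 : 0 < s2) {p : ℝ → ℝ} (hp : IsDensity p)
    (hp2 : Integrable fun u => (u - m) ^ 2 * p u) :
    Integrable fun u => p u * log (gaussPdf m s2 u) := by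
  simp_rw [mul_log_gaussPdf hs2]
  exact (hp.integrable.const_mul _).sub (hp2.div_const _)

lemma integral_mul_log_gaussPdf (hs2 : 0 < s2) {p : ℝ → ℝ} (hp : IsDensity p)
    (hp2 : Integrable fun u => (u - m) ^ 2 * p u) :
    ∫ u, p u * log (gaussPdf m s2 u) =
      -(1 / 2) * log (2 * π * s2) - (∫ u, (u - m) ^ 2 * p u) / (2 * s2) := by
  simp_rw [mul_log_gaussPdf hs2]
  rw [integral_sub (hp.integrable.const_mul _) (hp2.div_const _), integral_const_mul,
    integral_div, hp.2, mul_one]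

end Gaussian

section Gibbs

variable {α lam : ℝ} (hα : 0 < α) (hlam : 0 < lam) (m : ℝ)
include hα hlam

lemma sq_cost_add_negEntropy_gaussPdf :
    α * (∫ u, (u - m) ^ 2 * gaussPdf m (lam / (2 * α)) u) +
        lam * ∫ u, gaussPdf m (lam / (2 * α)) u * log (gaussPdf m (lam / (2 * α)) u) =
      -(lam / 2) * log (π * lam / α) := by
  have hs2 : 0 < lam / (2 * α) := by positivity
  rw [integral_mul_log_gaussPdf hs2 (isDensity_gaussPdf hs2)
    (integrable_sub_sq_mul_gaussPdf hs2 m), integral_sub_sq_mul_gaussPdf hs2]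
  field_simp
  ring_nf

lemma neg_mul_log_le_sq_cost_add_negEntropy {p : ℝ → ℝ} (hp : IsDensity p)
    (hp2 : Integrable fun u => (u - m) ^ 2 * p u) (hpp : Integrable fun u => p u * log (p u)) :
    -(lam / 2) * log (π * lam / α) ≤
      α * (∫ u, (u - m) ^ 2 * p u) + lam * ∫ u, p u * log (p u) := by
  have hs2 : 0 < lam / (2 * α) := by positivity
  have hgibbs := hp.integral_mul_log_le (isDensity_gaussPdf hs2) (gaussPdf_pos hs2) hpp
    (integrable_mul_log_gaussPdf hs2 hp hp2)
  rw [integral_mul_log_gaussPdf hs2 hp hp2] at hgibbs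
  have harg : 2 * π * (lam / (2 * α)) = π * lam / α := by field_simp
  have hcoef : lam * ((∫ u, (u - m) ^ 2 * p u) / (2 * (lam / (2 * α)))) =
      α * ∫ u, (u - m) ^ 2 * p u := by
    field_simp
  have hscaled := mul_le_mul_of_nonneg_left hgibbs hlam.le
  rw [harg, mul_sub, hcoef] at hscaled
  linarith

end Gibbs

section BellmanStep

variable {Ω : Type*} [MeasurableSpace Ω] {μ : Measure Ω} [IsProbabilityMeasure μ] {r : Ω → ℝ}
  {rf lam C m D : ℝ} {Vn : ℝ → ℝ}

lemma stepVal_of_quadratic (hr : Integrable r μ) (hr2 : Integrable (fun ω => r ω ^ 2) μ)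
    (hV : ∀ y, Vn y = C * (y - m) ^ 2 + D) (x : ℝ) {p : ℝ → ℝ} (hp : IsDensity p)
    (hp2 : Integrable fun u => u ^ 2 * p u) :
    stepVal μ r rf lam Vn x p =
      C * (rf * x - m) ^ 2 + D + 2 * C * (rf * x - m) * (∫ ω, r ω ∂μ) * (∫ u, u * p u) +
        C * (∫ ω, r ω ^ 2 ∂μ) * (∫ u, u ^ 2 * p u) + lam * ∫ u, p u * log (p u) := by
  set c₀ := C * (rf * x - m) ^ 2 + D
  have hinner : ∀ ω, ∫ u, Vn (rf * x + r ω * u) * p u =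
      c₀ * 1 + 2 * C * (rf * x - m) * (∫ u, u * p u) * r ω +
        C * (∫ u, u ^ 2 * p u) * r ω ^ 2 := by
    intro ω
    calc ∫ u, Vn (rf * x + r ω * u) * p u
        = ∫ u, (c₀ * p u + 2 * C * (rf * x - m) * r ω * (u * p u) +
            C * r ω ^ 2 * (u ^ 2 * p u)) := by
          congr 1; ext u; rw [hV]; ring
      _ = _ := by
          rw [integral_linear_combination₃ hp.integrable (hp.integrable_id_mul hp2) hp2, hp.2]
          ring
  rw [stepVal, integral_congr_ae (ae_of_all _ hinner),
    integral_linear_combination₃ (integrable_const 1) hr hr2]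
  simp only [integral_const, probReal_univ, smul_eq_mul, mul_one]
  ring

variable {a σ : ℝ}

lemma stepVal_eq_sq_cost_add_negEntropy (hmeas : Measurable r) (hσ : 0 < σ)
    (hra : ∫ ω, r ω ∂μ = a) (hrv : ∫ ω, r ω ^ 2 ∂μ = a ^ 2 + σ ^ 2)
    (hV : ∀ y, Vn y = C * (y - m) ^ 2 + D) (x : ℝ) {p : ℝ → ℝ} (hp : IsDensity p)
    (hp2 : Integrable fun u => u ^ 2 * p u) :
    stepVal μ r rf lam Vn x p =
      C * (a ^ 2 + σ ^ 2) * (∫ u, (u - -(a * (rf * x - m)) / (a ^ 2 + σ ^ 2)) ^ 2 * p u) +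
        lam * (∫ u, p u * log (p u)) +
        (C * σ ^ 2 / (a ^ 2 + σ ^ 2) * (rf * x - m) ^ 2 + D) := by
  have hK : 0 < a ^ 2 + σ ^ 2 := by positivity
  have hr2 : Integrable (fun ω => r ω ^ 2) μ :=
    .of_integral_ne_zero (by rw [hrv]; exact hK.ne')
  have hr : Integrable r μ :=
    ((memLp_two_iff_integrable_sq hmeas.aestronglyMeasurable).2 hr2).integrable one_le_two
  rw [stepVal_of_quadratic hr hr2 hV x hp hp2, hp.integral_sub_sq hp2, hra, hrv]
  field_simp
  ring

variable (μ r rf lam Vn) in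
def admissibleCosts (x : ℝ) : Set ℝ :=
  {J : ℝ | ∃ p : ℝ → ℝ, IsDensity p ∧ Integrable (fun u => u ^ 2 * p u) ∧
    Integrable (fun u => p u * Real.log (p u)) ∧ J = stepVal μ r rf lam Vn x p}

lemma isLeast_stepVal_gaussPdf_and_eq (hmeas : Measurable r) (hσ : 0 < σ) (hlam : 0 < lam)
    (hra : ∫ ω, r ω ∂μ = a) (hrv : ∫ ω, r ω ^ 2 ∂μ = a ^ 2 + σ ^ 2) (hC : 0 < C)
    (hV : ∀ y, Vn y = C * (y - m) ^ 2 + D) (x : ℝ) :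
    IsLeast (admissibleCosts μ r rf lam Vn x)
      (stepVal μ r rf lam Vn x
        (gaussPdf (-(a * (rf * x - m)) / (a ^ 2 + σ ^ 2))
          (lam / (2 * (C * (a ^ 2 + σ ^ 2)))))) ∧
    stepVal μ r rf lam Vn x
        (gaussPdf (-(a * (rf * x - m)) / (a ^ 2 + σ ^ 2)) (lam / (2 * (C * (a ^ 2 + σ ^ 2))))) =
      C * σ ^ 2 / (a ^ 2 + σ ^ 2) * (rf * x - m) ^ 2 +
        (D - lam / 2 * log (π * lam / (C * (a ^ 2 + σ ^ 2)))) := by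
  set m₀ := -(a * (rf * x - m)) / (a ^ 2 + σ ^ 2) with hm₀
  have hα : 0 < C * (a ^ 2 + σ ^ 2) := by positivity
  have hs2 : 0 < lam / (2 * (C * (a ^ 2 + σ ^ 2))) := by positivity
  have hq := isDensity_gaussPdf (m := m₀) hs2
  have hq2 : Integrable fun u => u ^ 2 * gaussPdf m₀ (lam / (2 * (C * (a ^ 2 + σ ^ 2)))) u := by
    simpa using integrable_sub_sq_mul_gaussPdf hs2 0
  have hvalue :=
    stepVal_eq_sq_cost_add_negEntropy (rf := rf) (lam := lam) hmeas hσ hra hrv hV x hq hq2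
  rw [← hm₀, sq_cost_add_negEntropy_gaussPdf hα hlam] at hvalue
  refine ⟨⟨⟨_, hq, hq2, ?_, rfl⟩, ?_⟩, by rw [hvalue]; ring⟩
  · exact integrable_mul_log_gaussPdf hs2 hq (integrable_sub_sq_mul_gaussPdf hs2 m₀)
  · rintro _ ⟨p, hp, hp2, hpp, rfl⟩
    rw [hvalue, stepVal_eq_sq_cost_add_negEntropy hmeas hσ hra hrv hV x hp hp2, ← hm₀]
    linarith
      [neg_mul_log_le_sq_cost_add_negEntropy hα hlam m₀ hp (hp.integrable_sub_sq hp2 m₀) hpp]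

end BellmanStep

lemma mul_sub_inv_pow_succ_mul {rf : ℝ} (hrf : rf ≠ 0) (x w : ℝ) (k : ℕ) :
    rf * (x - rf⁻¹ ^ (k + 1) * w) = rf * x - rf⁻¹ ^ k * w := by
  rw [pow_succ]
  field_simp

lemma exists_value_eq_quadratic {Ω : Type*} [MeasurableSpace Ω] {μ : Measure Ω}
    [IsProbabilityMeasure μ] {r : Ω → ℝ} (hmeas : Measurable r) {a σ rf lam w b : ℝ}
    (hσ : 0 < σ) (hlam : 0 < lam) (hrf : 0 < rf)
    (hra : ∫ ω, r ω ∂μ = a) (hrv : ∫ ω, r ω ^ 2 ∂μ = a ^ 2 + σ ^ 2) {T : ℕ} {V : ℕ → ℝ → ℝ}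
    (hVT : ∀ x, V T x = (x - w) ^ 2 - (w - b) ^ 2)
    (hrec : ∀ t < T, ∀ x, V t x = sInf (admissibleCosts μ r rf lam (V (t + 1)) x))
    {t : ℕ} (ht : t ≤ T) :
    ∃ D, ∀ x, V t x =
      (σ ^ 2 * rf ^ 2 / (a ^ 2 + σ ^ 2)) ^ (T - t) * (x - rf⁻¹ ^ (T - t) * w) ^ 2 + D := by
  induction ht using Nat.decreasingInduction with
  | self => exact ⟨-(w - b) ^ 2, fun x => by simp [hVT]; ring⟩
  | of_succ t ht ih =>
    obtain ⟨D, hD⟩ := ih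
    obtain ⟨k, hk, hk'⟩ : ∃ k, T - (t + 1) = k ∧ T - t = k + 1 := ⟨_, rfl, by omega⟩
    rw [hk] at hD
    have hstep :=
      isLeast_stepVal_gaussPdf_and_eq (rf := rf) hmeas hσ hlam hra hrv (by positivity) hD
    refine ⟨D - lam / 2 *
      log (π * lam / ((σ ^ 2 * rf ^ 2 / (a ^ 2 + σ ^ 2)) ^ k * (a ^ 2 + σ ^ 2))), fun x => ?_⟩
    rw [hrec t ht x, (hstep x).1.csInf_eq, (hstep x).2, hk', pow_succ,
      ← mul_sub_inv_pow_succ_mul hrf.ne']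
    ring

theorem stmt6_general {Ω : Type*} [MeasurableSpace Ω] (μ : Measure Ω) [IsProbabilityMeasure μ]
    (r : Ω → ℝ) (hmeas : Measurable r)
    (a σ rf lam w b : ℝ) (hσ : 0 < σ) (hlam : 0 < lam) (hrf : 0 < rf)
    (hra : ∫ ω, r ω ∂μ = a) (hrv : ∫ ω, (r ω) ^ 2 ∂μ = a ^ 2 + σ ^ 2)
    (T : ℕ) (V : ℕ → ℝ → ℝ)
    (hVT : ∀ x, V T x = (x - w) ^ 2 - (w - b) ^ 2)
    (hrec : ∀ t < T, ∀ x, V t x =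
      sInf {J : ℝ | ∃ p : ℝ → ℝ, IsDensity p ∧
        Integrable (fun u => u ^ 2 * p u) ∧
        Integrable (fun u => p u * Real.log (p u)) ∧
        J = stepVal μ r rf lam (V (t + 1)) x p}) :
    ∀ t < T, ∀ x,
      -- the Gaussian policy attains the minimum in the Bellman recursion at (t, x) ...
      V t x = stepVal μ r rf lam (V (t + 1)) x
        (gaussPdf (-(a * rf * (x - (rf⁻¹) ^ (T - t) * w)) / (a ^ 2 + σ ^ 2))
          (lam / (2 * (a ^ 2 + σ ^ 2)) *
            ((a ^ 2 + σ ^ 2) / (σ ^ 2 * rf ^ 2)) ^ (T - t - 1))) ∧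
      -- ... i.e. it minimizes among all admissible densities
      (∀ p : ℝ → ℝ, IsDensity p →
        Integrable (fun u => u ^ 2 * p u) →
        Integrable (fun u => p u * Real.log (p u)) →
        stepVal μ r rf lam (V (t + 1)) x
          (gaussPdf (-(a * rf * (x - (rf⁻¹) ^ (T - t) * w)) / (a ^ 2 + σ ^ 2))
            (lam / (2 * (a ^ 2 + σ ^ 2)) *
              ((a ^ 2 + σ ^ 2) / (σ ^ 2 * rf ^ 2)) ^ (T - t - 1))) ≤
          stepVal μ r rf lam (V (t + 1)) x p) := by
  intro t ht x
  obtain ⟨D, hD⟩ :=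
    exists_value_eq_quadratic hmeas hσ hlam hrf hra hrv hVT hrec (t := t + 1) ht
  obtain ⟨k, hk, hk'⟩ : ∃ k, T - (t + 1) = k ∧ T - t = k + 1 := ⟨_, rfl, by omega⟩
  rw [hk] at hD
  have hstep :=
    (isLeast_stepVal_gaussPdf_and_eq (rf := rf) hmeas hσ hlam hra hrv (by positivity) hD x).1
  have hvar : lam / (2 * (a ^ 2 + σ ^ 2)) * ((a ^ 2 + σ ^ 2) / (σ ^ 2 * rf ^ 2)) ^ k =
      lam / (2 * ((σ ^ 2 * rf ^ 2 / (a ^ 2 + σ ^ 2)) ^ k * (a ^ 2 + σ ^ 2))) := by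
    rw [div_pow, div_pow]
    field_simp
  rw [hk', Nat.add_sub_cancel, mul_assoc a, mul_sub_inv_pow_succ_mul hrf.ne', hvar]
  exact ⟨(hrec t ht x).trans hstep.csInf_eq,
    fun p hp hp2 hpp => hstep.2 ⟨p, hp, hp2, hpp, rfl⟩⟩

/-- Optimal policy of the discrete-time exploratory MV problem: the minimizing density
at time `t`, state `x` is Gaussian with mean `-a r_f (x - r_f^{-(T-t)} w)/(a²+σ²)` and
variance `(λ/(2(a²+σ²))) ((a²+σ²)/(σ²r_f²))^{T-t-1}`. -/
theorem stmt6 {Ω : Type*} [MeasurableSpace Ω] (μ : Measure Ω) [IsProbabilityMeasure μ]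
    (r : Ω → ℝ) (hmeas : Measurable r)
    (a σ rf lam w b : ℝ) (hσ : 0 < σ) (hlam : 0 < lam) (hrf : 0 < rf)
    (hra : ∫ ω, r ω ∂μ = a) (hrv : ∫ ω, (r ω) ^ 2 ∂μ = a ^ 2 + σ ^ 2)
    (T : ℕ) (hT : 0 < T) (V : ℕ → ℝ → ℝ)
    (hVT : ∀ x, V T x = (x - w) ^ 2 - (w - b) ^ 2)
    (hrec : ∀ t < T, ∀ x, V t x =
      sInf {J : ℝ | ∃ p : ℝ → ℝ, IsDensity p ∧
        Integrable (fun u => u ^ 2 * p u) ∧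
        Integrable (fun u => p u * Real.log (p u)) ∧
        J = stepVal μ r rf lam (V (t + 1)) x p}) :
    ∀ t < T, ∀ x,
      -- the Gaussian policy attains the minimum in the Bellman recursion at (t, x) ...
      V t x = stepVal μ r rf lam (V (t + 1)) x
        (gaussPdf (-(a * rf * (x - (rf⁻¹) ^ (T - t) * w)) / (a ^ 2 + σ ^ 2))
          (lam / (2 * (a ^ 2 + σ ^ 2)) *
            ((a ^ 2 + σ ^ 2) / (σ ^ 2 * rf ^ 2)) ^ (T - t - 1))) ∧
      -- ... i.e. it minimizes among all admissible densities
      (∀ p : ℝ → ℝ, IsDensity p →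
        Integrable (fun u => u ^ 2 * p u) →
        Integrable (fun u => p u * Real.log (p u)) →
        stepVal μ r rf lam (V (t + 1)) x
          (gaussPdf (-(a * rf * (x - (rf⁻¹) ^ (T - t) * w)) / (a ^ 2 + σ ^ 2))
            (lam / (2 * (a ^ 2 + σ ^ 2)) *
              ((a ^ 2 + σ ^ 2) / (σ ^ 2 * rf ^ 2)) ^ (T - t - 1))) ≤
          stepVal μ r rf lam (V (t + 1)) x p) :=
  stmt6_general μ r hmeas a σ rf lam w b hσ hlam hrf hra hrv T V hVT hrec
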